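/- arXiv:2211.00973 — 4 statements merged into one kernel-verified Lean document; each statement's English description precedes it below -/
import Mathlib

section
/- Let E ⊆ X, let V ∈ E, and let x : X → Bool. Then #_φ^E(x) ≤ #_φ^{E∖{V}}(x) ≤ #_φ^E(x) + #_φ^E(x[V ↦ ¬x(V)]), where x[V ↦ ¬x(V)] is the valuation obtained from x by flipping the value at V. -/
/-- The set of valuations agreeing with `x` on `E` (the equivalence class `[x]_E`). -/
def equivClass {X : Type*} (E : Set X) (x : X → Bool) : Set (X → Bool) :=
  {x' | ∀ v ∈ E, x' v = x v}

/-- The induced set `I_φ(x) = {y | ∃ z, φ x y z}`. -/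
def induced {X Y Z : Type*} (φ : (X → Bool) → (Y → Bool) → (Z → Bool) → Prop)
    (x : X → Bool) : Set (Y → Bool) :=
  {y | ∃ z, φ x y z}

/-- The induced set of a partial witness, `I_φ^E(x) = ⋃_{x' ∈ [x]_E} I_φ(x')`. -/
def inducedOn {X Y Z : Type*} (φ : (X → Bool) → (Y → Bool) → (Z → Bool) → Prop)
    (E : Set X) (x : X → Bool) : Set (Y → Bool) :=
  ⋃ x' ∈ equivClass E x, induced φ x'

/-- The count `#_φ(x) = |I_φ(x)|`. -/
noncomputable def mcount {X Y Z : Type*} (φ : (X → Bool) → (Y → Bool) → (Z → Bool) → Prop)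
    (x : X → Bool) : ℕ :=
  (induced φ x).ncard

/-- The partial count `#_φ^E(x) = |I_φ^E(x)|`. -/
noncomputable def mcountOn {X Y Z : Type*} (φ : (X → Bool) → (Y → Bool) → (Z → Bool) → Prop)
    (E : Set X) (x : X → Bool) : ℕ :=
  (inducedOn φ E x).ncard

/-- Models projected onto the witness variables `X`. -/
def modX {X Y Z : Type*} (φ : (X → Bool) → (Y → Bool) → (Z → Bool) → Prop) :
    Set (X → Bool) :=
  {x | ∃ y z, φ x y z}

/-- Models projected onto the counting variables `Y`. -/
def modY {X Y Z : Type*} (φ : (X → Bool) → (Y → Bool) → (Z → Bool) → Prop) :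
    Set (Y → Bool) :=
  {y | ∃ x z, φ x y z}

/-- Since `Bool` has two values, agreeing with `x` off `V` means agreeing with `x` or with its
flip at `V`. -/
theorem equivClass_diff_singleton {X : Type*} [DecidableEq X] (E : Set X) (V : X)
    (x : X → Bool) :
    equivClass (E \ {V}) x = equivClass E x ∪ equivClass E (Function.update x V (!x V)) := by
  ext x'
  simp only [equivClass, Set.mem_union, Set.mem_ofPred_eq, Set.mem_sdiff,
    Set.mem_singleton_iff, and_imp]
  constructor
  · intro h
    by_cases hV : x' V = x V
    · left
      intro v hv
      by_cases hvV : v = V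
      · exact hvV ▸ hV
      · exact h v hv hvV
    · right
      intro v hv
      by_cases hvV : v = V
      · subst hvV
        rw [Function.update_self]
        exact Bool.eq_not.mpr hV
      · rw [Function.update_of_ne hvV]
        exact h v hv hvV
  · rintro (h | h) v hv hvV
    · exact h v hv
    · rw [h v hv, Function.update_of_ne hvV]

section

variable {X Y Z : Type*} (φ : (X → Bool) → (Y → Bool) → (Z → Bool) → Prop)

theorem inducedOn_anti {E E' : Set X} (hE : E' ⊆ E) (x : X → Bool) :
    inducedOn φ E x ⊆ inducedOn φ E' x :=
  Set.biUnion_subset_biUnion_left fun _ hx' v hv => hx' v (hE hv)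

theorem inducedOn_diff_singleton [DecidableEq X] (E : Set X) (V : X) (x : X → Bool) :
    inducedOn φ (E \ {V}) x = inducedOn φ E x ∪ inducedOn φ E (Function.update x V (!x V)) := by
  rw [inducedOn, equivClass_diff_singleton, Set.biUnion_union]
  rfl

theorem mcountOn_anti [Finite Y] {E E' : Set X} (hE : E' ⊆ E) (x : X → Bool) :
    mcountOn φ E x ≤ mcountOn φ E' x :=
  Set.ncard_le_ncard (inducedOn_anti φ hE x) (Set.toFinite _)

theorem mcountOn_diff_singleton_le [DecidableEq X] (E : Set X) (V : X) (x : X → Bool) :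
    mcountOn φ (E \ {V}) x ≤ mcountOn φ E x + mcountOn φ E (Function.update x V (!x V)) := by
  rw [mcountOn, inducedOn_diff_singleton]
  exact Set.ncard_union_le _ _

end

theorem relaxing_bounds_each_general
    {X Y Z : Type*} [Fintype Y] [DecidableEq X]
    (φ : (X → Bool) → (Y → Bool) → (Z → Bool) → Prop)
    (E : Set X) (V : X) (x : X → Bool) :
    mcountOn φ E x ≤ mcountOn φ (E \ {V}) x ∧
      mcountOn φ (E \ {V}) x ≤
        mcountOn φ E x + mcountOn φ E (Function.update x V (!x V)) :=
  ⟨mcountOn_anti φ Set.sdiff_subset x,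
    mcountOn_diff_singleton_le φ E V x⟩

theorem relaxing_bounds_each
    {X Y Z : Type*} [Fintype X] [Fintype Y] [Fintype Z] [DecidableEq X]
    (φ : (X → Bool) → (Y → Bool) → (Z → Bool) → Prop)
    (E : Set X) (V : X) (hV : V ∈ E) (x : X → Bool) :
    mcountOn φ E x ≤ mcountOn φ (E \ {V}) x ∧
      mcountOn φ (E \ {V}) x ≤
        mcountOn φ E x + mcountOn φ E (Function.update x V (!x V)) :=
  relaxing_bounds_each_general φ E V x
end

section
/- Termination of the CEGAR loop with an exact oracle: let φ_0 = φ and, for i < k, let φ_{i+1} = φ_i ∧ ¬[x_i]_{E_i} for some E_i ⊆ X and some x_i ∈ Mod_X(φ_i); then the number of iterations is bounded by the projected model count, i.e., k ≤ |Mod_X(φ)|. -/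
/-! Each blocking step removes the model `x_i` from `Mod_X` and adds no new models, so the sets
`Mod_X(φ_i)` form a decreasing chain and `x_i ∉ Mod_X(φ_j)` for `j > i`. Hence the `x_i` are
pairwise distinct elements of `Mod_X(φ)`. -/

theorem Set.subset_of_le_of_succ_subset {α : Type*} {S : ℕ → Set α} {k : ℕ}
    (hS : ∀ i < k, S (i + 1) ⊆ S i) {i j : ℕ} (hij : i ≤ j) (hjk : j ≤ k) : S j ⊆ S i := by
  induction j, hij using Nat.le_induction with
  | base => exact subset_rfl
  | succ j _ ih => exact (hS j hjk).trans (ih (Nat.le_of_succ_le hjk))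

theorem Set.le_ncard_of_succ_subset_of_notMem {α : Type*} {S : ℕ → Set α} {a : ℕ → α} {k : ℕ}
    (hfin : (S 0).Finite) (hS : ∀ i < k, S (i + 1) ⊆ S i)
    (hmem : ∀ i < k, a i ∈ S i) (hnot : ∀ i < k, a i ∉ S (i + 1)) : k ≤ (S 0).ncard := by
  have hne : ∀ i j, i < j → j < k → a i ≠ a j := fun i j hij hjk heq =>
    hnot i (hij.trans hjk) (heq ▸ Set.subset_of_le_of_succ_subset hS hij hjk.le (hmem j hjk))
  refine Set.le_ncard_of_inj_on_range a
    (fun i hi => Set.subset_of_le_of_succ_subset hS (Nat.zero_le i) hi.le (hmem i hi))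
    (fun i hi j hj heq => ?_) hfin
  rcases lt_trichotomy i j with hij | hij | hij
  · exact absurd heq (hne i j hij hj)
  · exact hij
  · exact absurd heq.symm (hne j i hij hi)

section Blocking

variable {X Y Z : Type*} (φ : (X → Bool) → (Y → Bool) → (Z → Bool) → Prop) (E : Set X)
  (x : X → Bool)

theorem modX_block_subset :
    modX (fun x' y z => φ x' y z ∧ x' ∉ equivClass E x) ⊆ modX φ :=
  fun _ ⟨y, z, h⟩ => ⟨y, z, h.1⟩

theorem notMem_modX_block : x ∉ modX (fun x' y z => φ x' y z ∧ x' ∉ equivClass E x) :=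
  fun ⟨_, _, h⟩ => h.2 fun _ _ => rfl

end Blocking

theorem cegar_terminates_general
    {X Y Z : Type*} [Fintype X]
    (φ : (X → Bool) → (Y → Bool) → (Z → Bool) → Prop)
    (k : ℕ)
    (φs : ℕ → (X → Bool) → (Y → Bool) → (Z → Bool) → Prop)
    (xs : ℕ → X → Bool) (Es : ℕ → Set X)
    (h0 : φs 0 = φ)
    (hstep : ∀ i < k,
      φs (i + 1) = fun x' y z => φs i x' y z ∧ x' ∉ equivClass (Es i) (xs i))
    (hmem : ∀ i < k, xs i ∈ modX (φs i)) :
    k ≤ (modX φ).ncard := by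
  subst h0
  refine Set.le_ncard_of_succ_subset_of_notMem (S := fun i => modX (φs i)) (Set.toFinite _)
    (fun i hi => ?_) hmem (fun i hi => ?_)
  · rw [hstep i hi]
    exact modX_block_subset _ _ _
  · rw [hstep i hi]
    exact notMem_modX_block _ _ _

theorem cegar_terminates
    {X Y Z : Type*} [Fintype X] [Fintype Y] [Fintype Z]
    (φ : (X → Bool) → (Y → Bool) → (Z → Bool) → Prop)
    (k : ℕ)
    (φs : ℕ → (X → Bool) → (Y → Bool) → (Z → Bool) → Prop)
    (xs : ℕ → X → Bool) (Es : ℕ → Set X)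
    (h0 : φs 0 = φ)
    (hstep : ∀ i < k,
      φs (i + 1) = fun x' y z => φs i x' y z ∧ x' ∉ equivClass (Es i) (xs i))
    (hmem : ∀ i < k, xs i ∈ modX (φs i)) :
    k ≤ (modX φ).ncard :=
  cegar_terminates_general φ k φs xs Es h0 hstep hmem
end

section
/- Blocked classes are bounded (Lemma on bounded unions): let φ_0 = φ and, for i < k, let φ_{i+1} = φ_i ∧ ¬[x_i]_{E_i} for valuations x_i : X → Bool and sets E_i ⊆ X, and let (n_i)_{i<k} be a nondecreasing sequence of natural numbers such that the blocked generalizations are n_i-bounding, i.e., #_{φ_i}^{E_i}(x_i) ≤ n_i for each i < k. Then every valuation x' ∈ ⋃_{i<k} [x_i]_{E_i} satisfies #_φ(x') ≤ n_{k-1}. -/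
/-! If `i` is the first index with `x' ∈ [x_i]_{E_i}`, then `x'` survives the first `i` blockings,
so `I_φ(x') ⊆ I_{φ_i}(x') ⊆ I_{φ_i}^{E_i}(x_i)`, whose size is at most `n_i ≤ n_{k-1}`. -/

section Blocking

variable {X Y Z : Type*}

theorem induced_subset_inducedOn {φ : (X → Bool) → (Y → Bool) → (Z → Bool) → Prop}
    {E : Set X} {x₀ x : X → Bool} (hx : x ∈ equivClass E x₀) :
    induced φ x ⊆ inducedOn φ E x₀ :=
  Set.subset_biUnion_of_mem (u := fun x' => induced φ x') hx

theorem induced_subset_induced_of_not_mem_blocked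
    {φs : ℕ → (X → Bool) → (Y → Bool) → (Z → Bool) → Prop}
    {xs : ℕ → X → Bool} {Es : ℕ → Set X} {m : ℕ}
    (hstep : ∀ i < m,
      φs (i + 1) = fun x' y z => φs i x' y z ∧ x' ∉ equivClass (Es i) (xs i))
    {x : X → Bool} (hx : ∀ j < m, x ∉ equivClass (Es j) (xs j)) :
    induced (φs 0) x ⊆ induced (φs m) x := by
  induction m with
  | zero => exact subset_rfl
  | succ m ih =>
    intro y hy
    obtain ⟨z, hz⟩ := ih (fun i hi => hstep i (by omega)) (fun j hj => hx j (by omega)) hy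
    refine ⟨z, ?_⟩
    rw [hstep m m.lt_succ_self]
    exact ⟨hz, hx m m.lt_succ_self⟩

end Blocking

theorem blocked_classes_bounded_general
    {X Y Z : Type*} [Fintype Y]
    (φ : (X → Bool) → (Y → Bool) → (Z → Bool) → Prop)
    (k : ℕ)
    (φs : ℕ → (X → Bool) → (Y → Bool) → (Z → Bool) → Prop)
    (xs : ℕ → X → Bool) (Es : ℕ → Set X) (ns : ℕ → ℕ)
    (h0 : φs 0 = φ)
    (hstep : ∀ i < k,
      φs (i + 1) = fun x' y z => φs i x' y z ∧ x' ∉ equivClass (Es i) (xs i))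
    (hmono : ∀ i, ∀ j, i ≤ j → j < k → ns i ≤ ns j)
    (hbound : ∀ i < k, mcountOn (φs i) (Es i) (xs i) ≤ ns i) :
    ∀ x' ∈ ⋃ i < k, equivClass (Es i) (xs i), mcount φ x' ≤ ns (k - 1) := by
  classical
  intro x' hx'
  have hex : ∃ i, i < k ∧ x' ∈ equivClass (Es i) (xs i) := by simpa using hx'
  obtain ⟨hik, hmem⟩ := Nat.find_spec hex
  set i := Nat.find hex
  have hsurvives : ∀ j < i, x' ∉ equivClass (Es j) (xs j) :=
    fun j hj hmemj => Nat.find_min hex hj ⟨hj.trans hik, hmemj⟩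
  have hsub : induced φ x' ⊆ inducedOn (φs i) (Es i) (xs i) := by
    rw [← h0]
    exact (induced_subset_induced_of_not_mem_blocked (fun j hj => hstep j (hj.trans hik))
      hsurvives).trans (induced_subset_inducedOn hmem)
  calc mcount φ x' ≤ mcountOn (φs i) (Es i) (xs i) := Set.ncard_le_ncard hsub (Set.toFinite _)
    _ ≤ ns i := hbound i hik
    _ ≤ ns (k - 1) := hmono i (k - 1) (by omega) (by omega)

theorem blocked_classes_bounded
    {X Y Z : Type*} [Fintype X] [Fintype Y] [Fintype Z]
    (φ : (X → Bool) → (Y → Bool) → (Z → Bool) → Prop)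
    (k : ℕ)
    (φs : ℕ → (X → Bool) → (Y → Bool) → (Z → Bool) → Prop)
    (xs : ℕ → X → Bool) (Es : ℕ → Set X) (ns : ℕ → ℕ)
    (h0 : φs 0 = φ)
    (hstep : ∀ i < k,
      φs (i + 1) = fun x' y z => φs i x' y z ∧ x' ∉ equivClass (Es i) (xs i))
    (hmono : ∀ i, ∀ j, i ≤ j → j < k → ns i ≤ ns j)
    (hbound : ∀ i < k, mcountOn (φs i) (Es i) (xs i) ≤ ns i) :
    ∀ x' ∈ ⋃ i < k, equivClass (Es i) (xs i), mcount φ x' ≤ ns (k - 1) :=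
  blocked_classes_bounded_general φ k φs xs Es ns h0 hstep hmono hbound
end

section
/- Correctness of symmetry breaking for MaxSharpSAT: let G be a set of signed permutations of X (each given by a permutation π of X and a sign map s : X → Bool acting by (σ·x)(V) = x(π(V)) XOR s(V)), each of which is a symmetry of φ (φ (σ·x) y z ↔ φ x y z for all x, y, z). Let ψ : (X → Bool) → Prop be a symmetry breaking predicate such that for every x ∈ Mod_X(φ) there exists σ ∈ G with ψ (σ·x). Then solving MaxSharpSAT on φ ∧ ψ yields the same optimum as on φ: max_{x ∈ Mod_X(φ∧ψ)} #_{φ∧ψ}(x) = max_{x ∈ Mod_X(φ)} #_φ(x), where φ ∧ ψ is the predicate (x,y,z) ↦ φ x y z ∧ ψ x. -/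
/-- Action of a signed permutation `(π, s)` of the witness variables on a
valuation: `(σ·x)(V) = x(π(V)) XOR s(V)`. -/
def sgnPermAct {X : Type*} (π : Equiv.Perm X) (s : X → Bool)
    (x : X → Bool) : X → Bool :=
  fun V => xor (x (π V)) (s V)

section

variable {X Y Z : Type*} {φ : (X → Bool) → (Y → Bool) → (Z → Bool) → Prop}

theorem induced_and_of_pos {ψ : (X → Bool) → Prop} {x : X → Bool} (hψ : ψ x) :
    induced (fun x' y z => φ x' y z ∧ ψ x') x = induced φ x := by
  ext y
  simp only [induced, Set.mem_ofPred_eq, and_iff_left hψ]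

theorem mcount_and_of_pos {ψ : (X → Bool) → Prop} {x : X → Bool} (hψ : ψ x) :
    mcount (fun x' y z => φ x' y z ∧ ψ x') x = mcount φ x :=
  congrArg Set.ncard (induced_and_of_pos hψ)

theorem mem_modX_and {ψ : (X → Bool) → Prop} {x : X → Bool} :
    x ∈ modX (fun x' y z => φ x' y z ∧ ψ x') ↔ x ∈ modX φ ∧ ψ x := by
  simp only [modX, Set.mem_ofPred_eq, exists_and_right]

theorem induced_apply_of_invariant {f : (X → Bool) → X → Bool}
    (hf : ∀ x y z, φ (f x) y z ↔ φ x y z) (x : X → Bool) :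
    induced φ (f x) = induced φ x := by
  ext y
  simp only [induced, Set.mem_ofPred_eq, hf]

theorem mcount_apply_of_invariant {f : (X → Bool) → X → Bool}
    (hf : ∀ x y z, φ (f x) y z ↔ φ x y z) (x : X → Bool) :
    mcount φ (f x) = mcount φ x :=
  congrArg Set.ncard (induced_apply_of_invariant hf x)

theorem apply_mem_modX_iff_of_invariant {f : (X → Bool) → X → Bool}
    (hf : ∀ x y z, φ (f x) y z ↔ φ x y z) {x : X → Bool} :
    f x ∈ modX φ ↔ x ∈ modX φ := by
  simp only [modX, Set.mem_ofPred_eq, hf]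

theorem image_mcount_and_eq {ψ : (X → Bool) → Prop}
    (h : ∀ x ∈ modX φ, ∃ x' ∈ modX φ, ψ x' ∧ mcount φ x' = mcount φ x) :
    (fun x => mcount (fun x' y z => φ x' y z ∧ ψ x') x) ''
        modX (fun x' y z => φ x' y z ∧ ψ x')
      = (fun x => mcount φ x) '' modX φ := by
  ext n
  constructor
  · rintro ⟨x, hx, rfl⟩
    obtain ⟨hxφ, hψ⟩ := mem_modX_and.mp hx
    exact ⟨x, hxφ, (mcount_and_of_pos hψ).symm⟩
  · rintro ⟨x, hx, rfl⟩
    obtain ⟨x', hx', hψ, hcount⟩ := h x hx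
    exact ⟨x', mem_modX_and.mpr ⟨hx', hψ⟩, (mcount_and_of_pos hψ).trans hcount⟩

end

theorem symmetry_breaking_correct_general
    {X Y Z : Type*}
    (φ : (X → Bool) → (Y → Bool) → (Z → Bool) → Prop)
    (G : Set (Equiv.Perm X × (X → Bool)))
    (hsym : ∀ σ ∈ G, ∀ (x : X → Bool) (y : Y → Bool) (z : Z → Bool),
      φ (sgnPermAct σ.1 σ.2 x) y z ↔ φ x y z)
    (ψ : (X → Bool) → Prop)
    (hbreak : ∀ x ∈ modX φ, ∃ σ ∈ G, ψ (sgnPermAct σ.1 σ.2 x)) :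
    sSup ((fun x => mcount (fun x' y z => φ x' y z ∧ ψ x') x) ''
        modX (fun x' y z => φ x' y z ∧ ψ x'))
      = sSup ((fun x => mcount φ x) '' modX φ) := by
  refine congrArg sSup (image_mcount_and_eq fun x hx => ?_)
  obtain ⟨σ, hσ, hψ⟩ := hbreak x hx
  exact ⟨sgnPermAct σ.1 σ.2 x, (apply_mem_modX_iff_of_invariant (hsym σ hσ)).mpr hx, hψ,
    mcount_apply_of_invariant (hsym σ hσ) x⟩

theorem symmetry_breaking_correct
    {X Y Z : Type*} [Fintype X] [Fintype Y] [Fintype Z]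
    (φ : (X → Bool) → (Y → Bool) → (Z → Bool) → Prop)
    (G : Set (Equiv.Perm X × (X → Bool)))
    (hsym : ∀ σ ∈ G, ∀ (x : X → Bool) (y : Y → Bool) (z : Z → Bool),
      φ (sgnPermAct σ.1 σ.2 x) y z ↔ φ x y z)
    (ψ : (X → Bool) → Prop)
    (hbreak : ∀ x ∈ modX φ, ∃ σ ∈ G, ψ (sgnPermAct σ.1 σ.2 x)) :
    sSup ((fun x => mcount (fun x' y z => φ x' y z ∧ ψ x') x) ''
        modX (fun x' y z => φ x' y z ∧ ψ x'))
      = sSup ((fun x => mcount φ x) '' modX φ) :=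
  symmetry_breaking_correct_general φ G hsym ψ hbreak
end
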